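/- If $\mu_{rx} < \frac{I_{xz}\dot\psi^2}{mgh} + \frac{b}{h}$ and $\mu_{fx} > \frac{I_{xz}\dot\psi^2}{mgh} - \frac{a}{h}$, then the normal forces $f_{fz} = \frac{mgb - mgh\mu_{rx} + I_{xz}\dot\psi^2}{h(\mu_{rx}-\mu_{fx}) - (a+b)}$ and $f_{rz} = \frac{mga + mgh\mu_{fx} - I_{xz}\dot\psi^2}{h(\mu_{rx}-\mu_{fx}) - (a+b)}$ are both strictly negative (so $-f_{fz} > 0$ and $-f_{rz} > 0$, meaning the ground pushes on both wheels and the model is well-posed). -/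
import Mathlib


/-- Well-posedness of the LT-CAR model: under the stated friction bounds
both normal tire forces are strictly negative. -/
theorem lt_car_normal_forces_negative
    (m g h a b μfx μrx Ixz ψ' : ℝ)
    (hm : 0 < m) (hg : 0 < g) (hh : 0 < h) (ha : 0 < a) (hb : 0 < b)
    (hrx : μrx < Ixz * ψ' ^ 2 / (m * g * h) + b / h)
    (hfx : μfx > Ixz * ψ' ^ 2 / (m * g * h) - a / h) :
    (m * g * b - m * g * h * μrx + Ixz * ψ' ^ 2) /
        (h * (μrx - μfx) - (a + b)) < 0 ∧
    (m * g * a + m * g * h * μfx - Ixz * ψ' ^ 2) /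
        (h * (μrx - μfx) - (a + b)) < 0 := by
  have hmg : 0 < m * g := mul_pos hm hg
  have hmgh : 0 < m * g * h := mul_pos hmg hh
  rw [div_add_div _ _ (ne_of_gt hmgh) (ne_of_gt hh), lt_div_iff₀ (by positivity)] at hrx
  rw [gt_iff_lt, div_sub_div _ _ (ne_of_gt hmgh) (ne_of_gt hh), div_lt_iff₀ (by positivity)] at hfx
  have h1 : 0 < m * g * b - m * g * h * μrx + Ixz * ψ' ^ 2 := by nlinarith
  have h2 : 0 < m * g * a + m * g * h * μfx - Ixz * ψ' ^ 2 := by nlinarith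
  have hd : h * (μrx - μfx) - (a + b) < 0 := by nlinarith
  exact ⟨div_neg_of_pos_of_neg h1 hd, div_neg_of_pos_of_neg h2 hd⟩
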